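/- For all integers n and q with 2 ≤ q ≤ n, the competition number of the Hamming graph H(n,q) satisfies k(H(n,q)) ≤ (n−q)·q^{n−1} + k(H(q,q)). -/

import Mathlib

open SimpleGraph

/-- The Hamming graph H(n,q): vertices are `Fin n → Fin q`, adjacent iff Hamming distance 1. -/
def hammingGraph (n q : ℕ) : SimpleGraph (Fin n → Fin q) where
  Adj x y := hammingDist x y = 1
  symm := by constructor; intro x y h; rwa [hammingDist_comm]
  loopless := by constructor; intro x h; simp [hammingDist_self] at h

/-- The competition graph of a digraph `D`. -/
def competitionGraph {V : Type*} (D : V → V → Prop) : SimpleGraph V where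
  Adj u v := u ≠ v ∧ ∃ x, D u x ∧ D v x
  symm := by constructor; rintro u v ⟨h, x, hu, hv⟩; exact ⟨h.symm, x, hv, hu⟩
  loopless := by constructor; rintro u ⟨h, _⟩; exact h rfl

/-- A digraph is acyclic iff it has no directed cycle. -/
def IsAcyclicDigraph {V : Type*} (D : V → V → Prop) : Prop :=
  ∀ v, ¬ Relation.TransGen D v v

/-- `G` together with `k` isolated vertices. -/
def addIsolated {V : Type*} (G : SimpleGraph V) (k : ℕ) : SimpleGraph (V ⊕ Fin k) where
  Adj x y := ∃ u v, x = Sum.inl u ∧ y = Sum.inl v ∧ G.Adj u v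
  symm := by constructor; rintro x y ⟨u, v, rfl, rfl, h⟩; exact ⟨v, u, rfl, rfl, h.symm⟩
  loopless := by constructor; rintro x ⟨u, v, rfl, h, hadj⟩; injection h with h; subst h; exact hadj.ne rfl

/-- The competition number of a graph. -/
noncomputable def competitionNumber {V : Type*} (G : SimpleGraph V) : ℕ :=
  sInf {k | ∃ D : (V ⊕ Fin k) → (V ⊕ Fin k) → Prop,
    IsAcyclicDigraph D ∧ competitionGraph D = addIsolated G k}

/-- The maximal clique `S_j(p)` of `H(n,q)`: all tuples agreeing with `p` off coordinate `j`. -/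
def Sset {n q : ℕ} (j : Fin n) (p : Fin n → Fin q) : Set (Fin n → Fin q) :=
  {x | ∀ i, i ≠ j → x i = p i}

/-- A maximal clique of a graph. -/
def IsMaxClique {V : Type*} (G : SimpleGraph V) (S : Set V) : Prop :=
  G.IsClique S ∧ ∀ T, G.IsClique T → S ⊆ T → S = T

/-- An edge clique cover. -/
def IsEdgeCliqueCover {V : Type*} (G : SimpleGraph V) (F : Finset (Finset V)) : Prop :=
  (∀ S ∈ F, G.IsClique (S : Set V)) ∧ ∀ u v, G.Adj u v → ∃ S ∈ F, u ∈ S ∧ v ∈ S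

/-- In-neighborhood of a vertex in a digraph. -/
def inNbhd {V : Type*} (D : V → V → Prop) (v : V) : Set V := {w | D w v}

/-!
Write `H(n,q)` as the box product `H(q,q) □ H(n-q,q)`, so that it consists of `q^(n-q)` slices,
copies of `H(q,q)`, joined by lines in the remaining `n - q` directions.

Start from an optimal acyclic digraph for `H(q,q)`. Give each line of `H(q,q)` a host: the
common out-neighbour of two of its points that is highest in the digraph. Distinct lines get
distinct hosts, because the in-neighbours of a vertex form a clique, and a clique meeting a line
in two points lies in it. Since `H(q,q)` has as many lines as vertices (`q^q`), the lines hosted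
by new vertices can be matched with the vertices hosting no line.

Copy this in every slice, with the slices in a row: a line hosted by a new vertex is hosted
instead by its matched vertex in the next slice, so only the last slice uses the
`k(H(q,q))` new vertices. Each of the `(n-q) q^(n-1)` lines outside the slices gets a new vertex
of its own. Ranking vertices by (slice, height) shows that the digraph is acyclic.
-/

section Realization

variable {V W α : Type*}

def CompetitionRealizable (G : SimpleGraph V) (k : ℕ) : Prop :=
  ∃ D : V ⊕ Fin k → V ⊕ Fin k → Prop, IsAcyclicDigraph D ∧ competitionGraph D = addIsolated G k

theorem competitionNumber_le {G : SimpleGraph V} {k : ℕ} (h : CompetitionRealizable G k) :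
    competitionNumber G ≤ k :=
  Nat.sInf_le h

theorem competitionRealizable_competitionNumber {G : SimpleGraph V} {k : ℕ}
    (h : CompetitionRealizable G k) : CompetitionRealizable G (competitionNumber G) :=
  Nat.sInf_mem (s := {k | CompetitionRealizable G k}) ⟨k, h⟩

theorem CompetitionRealizable.map {G : SimpleGraph V} {G' : SimpleGraph W} {k : ℕ} (e : G ≃g G')
    (h : CompetitionRealizable G k) : CompetitionRealizable G' k := by
  obtain ⟨D, hD, hG⟩ := h
  let f : W ⊕ Fin k ≃ V ⊕ Fin k := Equiv.sumCongr e.symm.toEquiv (Equiv.refl _)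
  refine ⟨fun x y => D (f x) (f y), fun x hx => hD (f x) (hx.lift f fun _ _ h => h), ?_⟩
  ext x y
  have hxy := congrArg (fun G => G.Adj (f x) (f y)) hG
  simp only [competitionGraph, addIsolated, f.injective.ne_iff] at hxy ⊢
  rw [← f.exists_congr_right] at hxy
  rw [hxy]
  rcases x with a | a <;> rcases y with b | b <;> simp [f, e.symm.map_adj_iff]

theorem isAcyclicDigraph_of_lt [Preorder α] {D : W → W → Prop} (r : W → α)
    (hr : ∀ x y, D x y → r x < r y) : IsAcyclicDigraph D :=
  fun x hx => lt_irrefl (r x) <| by simpa [Relation.transGen_eq_self] using hx.lift r hr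

theorem IsAcyclicDigraph.exists_rank [Finite W] {D : W → W → Prop} (hD : IsAcyclicDigraph D) :
    ∃ r : W → ℕ, ∀ x y, D x y → r x < r y :=
  ⟨fun x => {t | Relation.TransGen D t x}.ncard, fun x _ hxy =>
    Set.ncard_lt_ncard ⟨fun _ ht => ht.tail hxy, fun h => hD x (h (.single hxy))⟩ (Set.toFinite _)⟩

theorem adj_iff_of_competitionGraph_eq {G : SimpleGraph V} {k : ℕ}
    {D : V ⊕ Fin k → V ⊕ Fin k → Prop} (hG : competitionGraph D = addIsolated G k) {u v : V} :
    G.Adj u v ↔ u ≠ v ∧ ∃ x, D (.inl u) x ∧ D (.inl v) x := by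
  have := congrArg (fun G => G.Adj (Sum.inl u) (Sum.inl v)) hG
  simp only [competitionGraph, addIsolated, eq_iff_iff] at this
  simpa using this.symm

end Realization

section Hosting

variable {V C α : Type*} {k : ℕ}

structure IsCliqueCover (G : SimpleGraph V) (L : C → Set V) : Prop where
  isClique : ∀ c, G.IsClique (L c)
  exists_mem : ∀ u v, G.Adj u v → ∃ c, u ∈ L c ∧ v ∈ L c

def IsRankedHosting [Preorder α] (L : C → Set V) (host : C → V ⊕ Fin k) (rank : V → α) : Prop :=
  Function.Injective host ∧ ∀ c u w, u ∈ L c → host c = .inl w → rank u < rank w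

theorem IsCliqueCover.competitionRealizable [Preorder α] {G : SimpleGraph V} {L : C → Set V}
    (hL : IsCliqueCover G L) {host : C → V ⊕ Fin k} {rank : V → α}
    (hh : IsRankedHosting L host rank) : CompetitionRealizable G k := by
  let D : V ⊕ Fin k → V ⊕ Fin k → Prop := fun x y => ∃ c, ∃ u ∈ L c, x = .inl u ∧ y = host c
  refine ⟨D, isAcyclicDigraph_of_lt (Sum.elim (fun v => (rank v : WithTop α)) fun _ => ⊤) ?_, ?_⟩
  · rintro _ y ⟨c, u, hu, rfl, rfl⟩
    cases hc : host c with
    | inl w => simpa using hh.2 c u w hu hc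
    | inr _ => simp
  · ext x y
    constructor
    · rintro ⟨hxy, _, ⟨c, u, hu, rfl, rfl⟩, ⟨c', v, hv, rfl, hcc⟩⟩
      obtain rfl := hh.1 hcc
      exact ⟨u, v, rfl, rfl, hL.isClique c hu hv fun h => hxy (h ▸ rfl)⟩
    · rintro ⟨u, v, rfl, rfl, huv⟩
      obtain ⟨c, hu, hv⟩ := hL.exists_mem u v huv
      exact ⟨by simpa using huv.ne, host c, ⟨c, u, hu, rfl, rfl⟩, ⟨c, v, hv, rfl, rfl⟩⟩

theorem IsCliqueCover.competitionRealizable_card [Fintype C] {G : SimpleGraph V} {L : C → Set V}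
    (hL : IsCliqueCover G L) : CompetitionRealizable G (Fintype.card C) :=
  hL.competitionRealizable (rank := fun _ => 0)
    ⟨Sum.inr_injective.comp (Fintype.equivFin C).injective, fun _ _ _ _ h => nomatch h⟩

structure IsLineCover (G : SimpleGraph V) (L : C → Set V) : Prop extends IsCliqueCover G L where
  nontrivial : ∀ c, (L c).Nontrivial
  injective : Function.Injective L
  subset_of_isClique : ∀ c {S}, G.IsClique S → (S ∩ L c).Nontrivial → S ⊆ L c

theorem IsLineCover.eq_of_nontrivial_inter {G : SimpleGraph V} {L : C → Set V}
    (hL : IsLineCover G L) {c c' : C} (h : (L c ∩ L c').Nontrivial) : c = c' :=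
  hL.injective <| (hL.subset_of_isClique c' (hL.isClique c) h).antisymm
    (hL.subset_of_isClique c (hL.isClique c') (Set.inter_comm _ _ ▸ h))

theorem IsLineCover.exists_rankedHosting [Finite V] {G : SimpleGraph V} {L : C → Set V}
    (hL : IsLineCover G L) (h : CompetitionRealizable G k) :
    ∃ (host : C → V ⊕ Fin k) (rank : V → ℕ), IsRankedHosting L host rank := by
  obtain ⟨D, hD, hG⟩ := h
  obtain ⟨r, hr⟩ := hD.exists_rank
  let sinks (c : C) := {x | ∃ u ∈ L c, ∃ v ∈ L c, u ≠ v ∧ D (.inl u) x ∧ D (.inl v) x}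
  have exists_sink : ∀ c, ∀ u ∈ L c, ∃ x ∈ sinks c, D (.inl u) x := by
    intro c u hu
    obtain ⟨v, hv, hvu⟩ := (hL.nontrivial c).exists_ne u
    obtain ⟨-, x, hux, hvx⟩ := (adj_iff_of_competitionGraph_eq hG).1 (hL.isClique c hu hv hvu.symm)
    exact ⟨x, ⟨u, hu, v, hv, hvu.symm, hux, hvx⟩, hux⟩
  have exists_top : ∀ c, ∃ x ∈ sinks c, ∀ y ∈ sinks c, r y ≤ r x := by
    intro c
    obtain ⟨u, hu⟩ := (hL.nontrivial c).nonempty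
    obtain ⟨x, hx, -⟩ := exists_sink c u hu
    exact Set.exists_max_image _ r (Set.toFinite _) ⟨x, hx⟩
  choose host hsink htop using exists_top
  refine ⟨host, fun v => r (.inl v), fun c c' hcc => ?_, fun c u w hu hw => ?_⟩
  · have hclique : G.IsClique {v | D (.inl v) (host c)} := fun a ha b hb hab =>
      (adj_iff_of_competitionGraph_eq hG).2 ⟨hab, _, ha, hb⟩
    obtain ⟨u, hu, v, hv, huv, hux, hvx⟩ := hsink c
    obtain ⟨u', hu', v', hv', huv', hux', hvx'⟩ := hsink c'
    rw [← hcc] at hux' hvx'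
    have hsub := hL.subset_of_isClique c hclique ⟨u, ⟨hux, hu⟩, v, ⟨hvx, hv⟩, huv⟩
    exact hL.eq_of_nontrivial_inter ⟨u', ⟨hsub hux', hu'⟩, v', ⟨hsub hvx', hv'⟩, huv'⟩
  · obtain ⟨x, hx, hux⟩ := exists_sink c u hu
    show r (.inl u) < r (.inl w)
    calc r (.inl u) < r x := hr _ _ hux
      _ ≤ r (host c) := htop c x hx
      _ = r (.inl w) := by rw [hw]

end Hosting

section BoxProd

variable {V B C E α : Type*} {k : ℕ}

def boxCover (L : C → Set V) (M : E → Set B) : C × B ⊕ V × E → Set (V × B)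
  | .inl (c, t) => L c ×ˢ {t}
  | .inr (v, e) => {v} ×ˢ M e

theorem IsCliqueCover.boxProd {G : SimpleGraph V} {H : SimpleGraph B} {L : C → Set V}
    {M : E → Set B} (hL : IsCliqueCover G L) (hM : IsCliqueCover H M) :
    IsCliqueCover (G □ H) (boxCover L M) where
  isClique
    | .inl (c, t) => by
      rintro ⟨u, _⟩ ⟨hu, rfl⟩ ⟨v, _⟩ ⟨hv, hvt⟩ huv
      subst hvt
      exact .inl ⟨hL.isClique c hu hv fun h => huv (Prod.ext h rfl), rfl⟩
    | .inr (v, e) => by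
      rintro ⟨_, s⟩ ⟨rfl, hs⟩ ⟨_, t⟩ ⟨hv, ht⟩ hst
      subst hv
      exact .inr ⟨hM.isClique e hs ht fun h => hst (Prod.ext rfl h), rfl⟩
  exists_mem := by
    rintro ⟨u, s⟩ ⟨v, t⟩ (⟨huv, rfl : s = t⟩ | ⟨hst, rfl : u = v⟩)
    · obtain ⟨c, hu, hv⟩ := hL.exists_mem u v huv
      exact ⟨.inl (c, s), ⟨hu, rfl⟩, ⟨hv, rfl⟩⟩
    · obtain ⟨e, hs, ht⟩ := hM.exists_mem s t hst
      exact ⟨.inr (u, e), ⟨rfl, hs⟩, ⟨rfl, ht⟩⟩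

theorem exists_injective_extend_inl [Fintype C] [Fintype V] {β : Type*} (host : C → V ⊕ β)
    (hhost : Function.Injective host) (hC : Fintype.card C ≤ Fintype.card V) :
    ∃ φ : C → V, Function.Injective φ ∧ ∀ c w, host c = .inl w → φ c = w := by
  classical
  rcases isEmpty_or_nonempty V with hV | ⟨⟨v₀⟩⟩
  · have : IsEmpty C := Fintype.card_eq_zero_iff.1 (by simpa using hC)
    exact ⟨isEmptyElim, fun c => isEmptyElim c, fun c => isEmptyElim c⟩
  let f (c : C) : V := (host c).elim id fun _ => v₀
  let s : Finset C := {c | (host c).isLeft}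
  have hf : ∀ c ∈ s, host c = .inl (f c) := by
    intro c hc
    obtain ⟨w, hw⟩ := Sum.isLeft_iff.1 (Finset.mem_filter.1 hc).2
    simp [f, hw]
  obtain ⟨t, hst, ht⟩ :=
    Finset.exists_superset_card_eq (s := s.image f)
      (Finset.card_image_le.trans (Finset.card_le_univ s)) hC
  obtain ⟨g, hg⟩ := Finset.exists_equiv_extend_of_card_eq ht.symm hst
    fun c hc c' hc' h => hhost ((hf c hc).trans (h ▸ (hf c' hc').symm))
  refine ⟨fun c => g c, Subtype.val_injective.comp g.injective, fun c w hw => ?_⟩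
  simp [hg c (by simp [s, hw]), f, hw]

/-- `eB` lines up the slices; `φ c` is the vertex matched with the line `L c`. -/
def boxHost (host : C → V ⊕ Fin k) (φ : C → V) {s : ℕ} (eB : B ≃ Fin s) {K : ℕ}
    (toK : V × E ⊕ Fin k → Fin K) : C × B ⊕ V × E → V × B ⊕ Fin K
  | .inl (c, t) => (host c).elim (fun _ => .inl (φ c, t)) fun κ =>
      if h : (eB t : ℕ) + 1 < s then .inl (φ c, eB.symm ⟨eB t + 1, h⟩) else .inr (toK (.inr κ))
  | .inr ve => .inr (toK (.inl ve))

theorem boxHost_injective {host : C → V ⊕ Fin k} {φ : C → V} {s : ℕ} {eB : B ≃ Fin s} {K : ℕ}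
    {toK : V × E ⊕ Fin k → Fin K} (hhost : Function.Injective host) (hφ : Function.Injective φ)
    (htoK : Function.Injective toK) : Function.Injective (boxHost host φ eB toK) := by
  rintro (⟨c, t⟩ | ⟨v, e⟩) (⟨c', t'⟩ | ⟨v', e'⟩) h
  · cases hc : host c <;> cases hc' : host c' <;>
      simp only [boxHost, hc, hc', Sum.elim_inl, Sum.elim_inr] at h <;>
      (try split_ifs at h) <;> simp_all [hφ.eq_iff, htoK.eq_iff, Fin.val_inj]
    -- two lines of the last slice
    exact ⟨hhost (hc.trans hc'.symm), eB.injective (Fin.ext (by omega))⟩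
  · cases hc : host c <;> simp only [boxHost, hc, Sum.elim_inl, Sum.elim_inr] at h <;>
      (try split_ifs at h) <;> simp_all [htoK.eq_iff]
  · cases hc' : host c' <;> simp only [boxHost, hc', Sum.elim_inl, Sum.elim_inr] at h <;>
      (try split_ifs at h) <;> simp_all [htoK.eq_iff]
  · simp_all [boxHost, htoK.eq_iff]

theorem isRankedHosting_boxHost [Preorder α] {L : C → Set V} {host : C → V ⊕ Fin k} {rank : V → α}
    (hh : IsRankedHosting L host rank) {φ : C → V} (hφ : Function.Injective φ)
    (hφw : ∀ c w, host c = .inl w → φ c = w) {s : ℕ} (eB : B ≃ Fin s) {K : ℕ}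
    {toK : V × E ⊕ Fin k → Fin K} (htoK : Function.Injective toK) (M : E → Set B) :
    IsRankedHosting (boxCover L M) (boxHost host φ eB toK)
      (fun p => toLex ((eB p.2 : ℕ), rank p.1)) := by
  refine ⟨boxHost_injective hh.1 hφ htoK, ?_⟩
  rintro (⟨c, t⟩ | ⟨v, e⟩) ⟨u, _⟩ ⟨w, t'⟩ hu hw
  · obtain ⟨hu, rfl⟩ := hu
    cases hc : host c with
    | inl w' =>
      simp only [boxHost, hc, Sum.elim_inl, Sum.inl.injEq, Prod.mk.injEq] at hw
      obtain ⟨rfl, rfl⟩ := hw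
      exact Prod.Lex.toLex_lt_toLex.2 (.inr ⟨rfl, hh.2 c u _ hu (hφw c _ hc ▸ hc)⟩)
    | inr κ =>
      simp only [boxHost, hc, Sum.elim_inr] at hw
      split_ifs at hw with hlast
      simp only [Sum.inl.injEq, Prod.mk.injEq] at hw
      obtain ⟨rfl, rfl⟩ := hw
      exact Prod.Lex.toLex_lt_toLex.2 (.inl (by simp))
  · simp [boxHost] at hw

theorem IsCliqueCover.competitionRealizable_boxProd [Fintype V] [Fintype B] [Fintype C]
    [Fintype E] [Preorder α] {G : SimpleGraph V} {H : SimpleGraph B} {L : C → Set V}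
    {M : E → Set B} (hL : IsCliqueCover G L) {host : C → V ⊕ Fin k} {rank : V → α}
    (hh : IsRankedHosting L host rank) (hC : Fintype.card C ≤ Fintype.card V)
    (hM : IsCliqueCover H M) :
    CompetitionRealizable (G □ H) (Fintype.card V * Fintype.card E + k) := by
  obtain ⟨φ, hφ, hφw⟩ := exists_injective_extend_inl host hh.1 hC
  let toK : V × E ⊕ Fin k ≃ Fin (Fintype.card V * Fintype.card E + k) :=
    Fintype.equivFinOfCardEq (by simp)
  exact (hL.boxProd hM).competitionRealizable
    (isRankedHosting_boxHost hh hφ hφw (Fintype.equivFin B) toK.injective M)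

end BoxProd

section Hamming

variable {n m q : ℕ}

theorem hammingGraph_adj_iff {x y : Fin n → Fin q} :
    (hammingGraph n q).Adj x y ↔ ∃ j, x j ≠ y j ∧ ∀ i ≠ j, x i = y i := by
  change hammingDist x y = 1 ↔ _
  simp only [hammingDist, Finset.card_eq_one, Finset.eq_singleton_iff_unique_mem,
    Finset.mem_filter, Finset.mem_univ, true_and]
  refine exists_congr fun j => and_congr_right fun _ => forall_congr' fun i => ?_
  rw [not_imp_comm]

theorem apply_ne_of_ne_of_eq_off {ι β : Type*} {x y : ι → β} {j : ι} (hne : x ≠ y)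
    (h : ∀ i ≠ j, x i = y i) : x j ≠ y j :=
  fun hj => hne <| funext fun i => by
    by_cases hi : i = j
    · exact hi ▸ hj
    · exact h i hi

theorem hammingGraph_adj_of_eq_off {x y : Fin n → Fin q} {j : Fin n} (hne : x ≠ y)
    (h : ∀ i ≠ j, x i = y i) : (hammingGraph n q).Adj x y :=
  hammingGraph_adj_iff.2 ⟨j, apply_ne_of_ne_of_eq_off hne h, h⟩

theorem hammingDist_append {a b : ℕ} (x₁ y₁ : Fin a → Fin q) (x₂ y₂ : Fin b → Fin q) :
    hammingDist (Fin.append x₁ x₂) (Fin.append y₁ y₂) = hammingDist x₁ y₁ + hammingDist x₂ y₂ := by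
  simp only [hammingDist, Finset.card_filter, Fin.sum_univ_add, Fin.append_left, Fin.append_right]

def hammingGraphAppendIso (a b q : ℕ) :
    (hammingGraph a q).boxProd (hammingGraph b q) ≃g hammingGraph (a + b) q where
  toEquiv := Fin.appendEquiv a b
  map_rel_iff' {x y} := by
    change hammingDist (Fin.append x.1 x.2) (Fin.append y.1 y.2) = 1 ↔
      hammingDist x.1 y.1 = 1 ∧ x.2 = y.2 ∨ hammingDist x.2 y.2 = 1 ∧ x.1 = y.1
    rw [hammingDist_append, ← hammingDist_eq_zero, ← hammingDist_eq_zero]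
    omega

def hammingLine (j : Fin (m + 1)) (p : Fin m → Fin q) : Set (Fin (m + 1) → Fin q) :=
  {x | Fin.removeNth j x = p}

theorem Fin.removeNth_eq_removeNth_iff {j : Fin (m + 1)} {x y : Fin (m + 1) → Fin q} :
    Fin.removeNth j x = Fin.removeNth j y ↔ ∀ i ≠ j, x i = y i := by
  rw [funext_iff, Fin.forall_iff_succAbove j]
  simp [Fin.removeNth, Fin.succAbove_ne]

theorem hammingGraph_eq_off_of_adj_of_adj {j : Fin n} {u v t : Fin n → Fin q}
    (huv : u j ≠ v j) (hoff : ∀ i ≠ j, u i = v i) (htu : (hammingGraph n q).Adj t u)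
    (htv : (hammingGraph n q).Adj t v) : ∀ i ≠ j, t i = u i := by
  obtain ⟨c, htc, hc⟩ := hammingGraph_adj_iff.1 htu
  obtain ⟨c', -, hc'⟩ := hammingGraph_adj_iff.1 htv
  by_cases hcj : c = j
  · exact hcj ▸ hc
  have hc'j : c' = j := by
    by_contra h
    exact huv ((hc j (Ne.symm hcj)).symm.trans (hc' j (Ne.symm h)))
  exact absurd ((hc' c (hc'j ▸ hcj)).trans (hoff c hcj).symm) htc

theorem isLineCover_hammingLine (hq : 2 ≤ q) :
    IsLineCover (hammingGraph (m + 1) q)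
      fun c : Fin (m + 1) × (Fin m → Fin q) => hammingLine c.1 c.2 where
  isClique := by
    rintro ⟨j, p⟩ x hx y hy hxy
    exact hammingGraph_adj_of_eq_off hxy (Fin.removeNth_eq_removeNth_iff.1 (hx.trans hy.symm))
  exists_mem u v huv := by
    obtain ⟨j, -, hoff⟩ := hammingGraph_adj_iff.1 huv
    exact ⟨(j, Fin.removeNth j u), rfl,
      Fin.removeNth_eq_removeNth_iff.2 fun i hi => (hoff i hi).symm⟩
  nontrivial := by
    rintro ⟨j, p⟩
    have := Fin.nontrivial_iff_two_le.2 hq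
    obtain ⟨a, b, hab⟩ := exists_pair_ne (Fin q)
    exact ⟨Fin.insertNth j a p, by simp [hammingLine], Fin.insertNth j b p, by simp [hammingLine],
      fun h => hab (by simpa using congrFun h j)⟩
  injective := by
    rintro ⟨j, p⟩ ⟨j', p'⟩ h
    have := Fin.nontrivial_iff_two_le.2 hq
    obtain ⟨a, b, hab⟩ := exists_pair_ne (Fin q)
    have hmem (z : Fin q) : Fin.insertNth j z p ∈ hammingLine j' p' := by
      simp only at h
      rw [← h]
      simp [hammingLine]
    obtain rfl : j = j' := by
      by_contra hjj
      have := Fin.removeNth_eq_removeNth_iff.1 ((hmem a).trans (hmem b).symm) j hjj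
      exact hab (by simpa using this)
    simpa [hammingLine] using hmem a
  subset_of_isClique := by
    rintro ⟨j, p⟩ S hS ⟨u, ⟨huS, hu⟩, v, ⟨hvS, hv⟩, huv⟩ t htS
    change Fin.removeNth j u = p at hu
    change Fin.removeNth j v = p at hv
    have hoff := Fin.removeNth_eq_removeNth_iff.1 (hu.trans hv.symm)
    change Fin.removeNth j t = p
    rw [← hu, Fin.removeNth_eq_removeNth_iff]
    by_cases htu : t = u
    · exact fun i _ => htu ▸ rfl
    by_cases htv : t = v
    · exact fun i hi => htv ▸ (hoff i hi).symm
    exact hammingGraph_eq_off_of_adj_of_adj (apply_ne_of_ne_of_eq_off huv hoff) hoff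
      (hS htS huS htu) (hS htS hvS htv)

end Hamming

theorem competitionNumber_Hnq_upper (n q : ℕ) (hq : 2 ≤ q) (hn : q ≤ n) :
    competitionNumber (hammingGraph n q) ≤
      (n - q) * q ^ (n - 1) + competitionNumber (hammingGraph q q) := by
  obtain ⟨m, rfl⟩ : ∃ m, q = m + 1 := ⟨q - 1, by omega⟩
  obtain ⟨b, rfl⟩ := Nat.exists_eq_add_of_le hn
  rcases b with _ | b
  · simp
  have hlines := isLineCover_hammingLine (m := m) hq
  obtain ⟨host, rank, hhost⟩ := hlines.exists_rankedHosting
    (competitionRealizable_competitionNumber hlines.competitionRealizable_card)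
  have hprod := hlines.competitionRealizable_boxProd hhost (by simp [pow_succ'])
    (isLineCover_hammingLine (m := b) hq).toIsCliqueCover
  refine (competitionNumber_le (hprod.map (hammingGraphAppendIso _ _ _))).trans_eq ?_
  simp
  ring
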